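/- arXiv:1706.02524 — 2 statements merged into one kernel-verified Lean document; each statement's English description precedes it below -/
import Mathlib

section
/- Let K and K̂ be N×N symmetric PSD matrices with K - K̂ PSD, and σ² > 0. Let λ_i and λ̂_i be the descending eigenvalues of K + σ²I and K̂ + σ²I respectively. If λ̂_N ≥ 2σ², then ½ Σᵢ (log λᵢ - log λ̂ᵢ) ≤ (1/(2σ²)) Σᵢ (λᵢ - λ̂ᵢ) - ½ Σᵢ (log λᵢ - log λ̂ᵢ). In other words, the slack of the Nyström upper bound on -½ log det(K+σ²I) is at most the slack of the variational lower bound -½ log det(K̂+σ²I) - (1/(2σ²))Tr(K - K̂). -/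
/-!
Write `A = K + σ²I`, `B = K̂ + σ²I` and whiten `B`: with `U` an orthonormal eigenbasis of `B`,
`W = U · diag(λ̂ᵢ^{-1/2})` satisfies `Wᴴ B W = 1`, so `C = Wᴴ A W = 1 + Wᴴ (A - B) W` is positive
definite and `det C = det A / det B`. Then `log x ≤ x - 1` on the eigenvalues of `C` gives
`log det A - log det B = log det C ≤ tr C - N = tr (Wᴴ (A - B) W) = ∑ᵢ (Uᴴ (A - B) U)ᵢᵢ / λ̂ᵢ`,
and since the diagonal entries are nonnegative and `λ̂ᵢ ≥ 2σ²` this is at most `tr (A - B) / (2σ²)`.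
The claim is this inequality halved and rearranged.
-/

open Matrix

namespace Matrix

variable {n : Type*} [Fintype n] [DecidableEq n]

theorem det_mul_mul_mul_det_of_mul_mul_eq_one {R : Type*} [CommRing R] {P Q B : Matrix n n R}
    (h : P * B * Q = 1) (A : Matrix n n R) : (P * A * Q).det * B.det = A.det := by
  have hdet : P.det * B.det * Q.det = 1 := by simpa only [det_mul, det_one] using congrArg det h
  calc (P * A * Q).det * B.det = (P.det * B.det * Q.det) * A.det := by
        simp only [det_mul]; ring
    _ = A.det := by rw [hdet, one_mul]

theorem PosDef.log_det_eq_sum_log_eigenvalues {A : Matrix n n ℝ} (hA : A.PosDef) :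
    Real.log A.det = ∑ i, Real.log (hA.1.eigenvalues i) := by
  rw [hA.1.det_eq_prod_eigenvalues]
  exact Real.log_prod fun i _ => (hA.eigenvalues_pos i).ne'

theorem PosDef.log_det_le_trace_sub_card {A : Matrix n n ℝ} (hA : A.PosDef) :
    Real.log A.det ≤ A.trace - Fintype.card n := by
  rw [hA.log_det_eq_sum_log_eigenvalues, hA.1.trace_eq_sum_eigenvalues]
  simp only [RCLike.ofReal_real_eq_id, id, Finset.card_univ.symm, Finset.card_eq_sum_ones,
    Nat.cast_sum, Nat.cast_one, ← Finset.sum_sub_distrib]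
  exact Finset.sum_le_sum fun i _ => Real.log_le_sub_one_of_pos (hA.eigenvalues_pos i)

namespace IsHermitian

variable {B : Matrix n n ℝ} (hB : B.IsHermitian)

theorem star_eigenvectorUnitary_mul_mul_eigenvectorUnitary :
    star (hB.eigenvectorUnitary : Matrix n n ℝ) * B * hB.eigenvectorUnitary =
      diagonal hB.eigenvalues := by
  simpa [Unitary.conjStarAlgAut_star_apply] using hB.conjStarAlgAut_star_eigenvectorUnitary

noncomputable def whitening : Matrix n n ℝ :=
  (hB.eigenvectorUnitary : Matrix n n ℝ) * diagonal fun i => (√(hB.eigenvalues i))⁻¹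

theorem conjTranspose_whitening_mul_mul_whitening_eq_diagonal (D : Matrix n n ℝ) :
    hB.whiteningᴴ * D * hB.whitening =
      diagonal (fun i => (√(hB.eigenvalues i))⁻¹) *
        (star (hB.eigenvectorUnitary : Matrix n n ℝ) * D * hB.eigenvectorUnitary) *
        diagonal fun i => (√(hB.eigenvalues i))⁻¹ := by
  rw [whitening, conjTranspose_mul, diagonal_conjTranspose, star_eq_conjTranspose]
  simp only [Matrix.mul_assoc]
  rfl

theorem conjTranspose_whitening_mul_mul_whitening (hpos : ∀ i, 0 < hB.eigenvalues i) :
    hB.whiteningᴴ * B * hB.whitening = 1 := by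
  rw [conjTranspose_whitening_mul_mul_whitening_eq_diagonal,
    star_eigenvectorUnitary_mul_mul_eigenvectorUnitary, diagonal_mul_diagonal,
    diagonal_mul_diagonal, ← diagonal_one]
  congr 1
  funext i
  field_simp
  rw [Real.sq_sqrt (hpos i).le, div_self (hpos i).ne']

theorem trace_conjTranspose_whitening_mul_mul_whitening_le {c : ℝ} (hc : 0 < c)
    (hBc : ∀ i, c ≤ hB.eigenvalues i) {D : Matrix n n ℝ} (hD : D.PosSemidef) :
    (hB.whiteningᴴ * D * hB.whitening).trace ≤ D.trace / c := by
  set U : Matrix n n ℝ := (hB.eigenvectorUnitary : Matrix n n ℝ)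
  have hD' : (star U * D * U).PosSemidef := hD.conjTranspose_mul_mul_same U
  have htr : (star U * D * U).trace = D.trace := by
    rw [trace_mul_cycle, show U * star U = 1 from Unitary.coe_mul_star_self _, one_mul]
  rw [conjTranspose_whitening_mul_mul_whitening_eq_diagonal, ← htr, trace, trace,
    Finset.sum_div]
  gcongr with i
  have hdi : 0 < hB.eigenvalues i := hc.trans_le (hBc i)
  calc (diagonal (fun i => (√(hB.eigenvalues i))⁻¹) * (star U * D * U) *
          diagonal fun i => (√(hB.eigenvalues i))⁻¹).diag i
      = (star U * D * U) i i / hB.eigenvalues i := by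
        simp only [diag, diagonal_mul, mul_diagonal]
        field_simp
        rw [Real.sq_sqrt hdi.le, mul_comm]
    _ ≤ (star U * D * U).diag i / c := div_le_div_of_nonneg_left hD'.diag_nonneg hc (hBc i)

end IsHermitian

theorem log_det_sub_log_det_le {A B : Matrix n n ℝ} (hB : B.IsHermitian)
    (hAB : (A - B).PosSemidef) {c : ℝ} (hc : 0 < c) (hBc : ∀ i, c ≤ hB.eigenvalues i) :
    Real.log A.det - Real.log B.det ≤ (A.trace - B.trace) / c := by
  have hBpos : ∀ i, 0 < hB.eigenvalues i := fun i => hc.trans_le (hBc i)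
  have hBpd : B.PosDef := hB.posDef_iff_eigenvalues_pos.mpr hBpos
  set W := hB.whitening
  have hW : Wᴴ * B * W = 1 := hB.conjTranspose_whitening_mul_mul_whitening hBpos
  have hC : Wᴴ * A * W = 1 + Wᴴ * (A - B) * W := by
    rw [Matrix.mul_sub, Matrix.sub_mul, hW, add_sub_cancel]
  have hCpd : (Wᴴ * A * W).PosDef :=
    hC ▸ PosDef.one.add_posSemidef (hAB.conjTranspose_mul_mul_same W)
  calc Real.log A.det - Real.log B.det = Real.log (Wᴴ * A * W).det := by
        rw [← det_mul_mul_mul_det_of_mul_mul_eq_one hW A,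
          Real.log_mul hCpd.det_pos.ne' hBpd.det_pos.ne', add_sub_cancel_right]
    _ ≤ (Wᴴ * A * W).trace - Fintype.card n := hCpd.log_det_le_trace_sub_card
    _ = (Wᴴ * (A - B) * W).trace := by rw [hC, trace_add, trace_one, add_sub_cancel_left]
    _ ≤ (A - B).trace / c := hB.trace_conjTranspose_whitening_mul_mul_whitening_le hc hBc hAB
    _ = (A.trace - B.trace) / c := by rw [trace_sub]

theorem IsHermitian.sum_log_eigenvalues_sub_le {A B : Matrix n n ℝ} (hA : A.IsHermitian)
    (hB : B.IsHermitian) (hAB : (A - B).PosSemidef) {c : ℝ} (hc : 0 < c)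
    (hBc : ∀ i, c ≤ hB.eigenvalues i) :
    ∑ i, Real.log (hA.eigenvalues i) - ∑ i, Real.log (hB.eigenvalues i) ≤
      (∑ i, hA.eigenvalues i - ∑ i, hB.eigenvalues i) / c := by
  have hBpd : B.PosDef := hB.posDef_iff_eigenvalues_pos.mpr fun i => hc.trans_le (hBc i)
  have hApd : A.PosDef := by simpa using hBpd.add_posSemidef hAB
  have htrace (M : Matrix n n ℝ) (hM : M.IsHermitian) : M.trace = ∑ i, hM.eigenvalues i := by
    simp [hM.trace_eq_sum_eigenvalues]
  rw [← hApd.log_det_eq_sum_log_eigenvalues, ← hBpd.log_det_eq_sum_log_eigenvalues,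
    ← htrace A hA, ← htrace B hB]
  exact log_det_sub_log_det_le hB hAB hc hBc

end Matrix

theorem prop1_nld_slack_general {n : ℕ} (K Khat : Matrix (Fin (n + 1)) (Fin (n + 1)) ℝ)
    (hdiff : (K - Khat).PosSemidef)
    (σ : ℝ) (hσ : 0 < σ ^ 2)
    (hH : (K + σ ^ 2 • 1).IsHermitian) (hH' : (Khat + σ ^ 2 • 1).IsHermitian)
    (lam lamhat : Fin (n + 1) → ℝ)
    (hlamhat_desc : Antitone lamhat)
    (hlam : ∃ e : Fin (n + 1) ≃ Fin (n + 1), lam = hH.eigenvalues ∘ e)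
    (hlamhat : ∃ e : Fin (n + 1) ≃ Fin (n + 1), lamhat = hH'.eigenvalues ∘ e)
    (hmin : 2 * σ ^ 2 ≤ lamhat (Fin.last n)) :
    (1 / 2) * ∑ i, (Real.log (lam i) - Real.log (lamhat i)) ≤
      (1 / (2 * σ ^ 2)) * ∑ i, (lam i - lamhat i) -
        (1 / 2) * ∑ i, (Real.log (lam i) - Real.log (lamhat i)) := by
  obtain ⟨e, rfl⟩ := hlam
  obtain ⟨e', rfl⟩ := hlamhat
  have hBc (i : Fin (n + 1)) : 2 * σ ^ 2 ≤ hH'.eigenvalues i := by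
    simpa using hmin.trans (hlamhat_desc (Fin.le_last (e'.symm i)))
  have key := hH.sum_log_eigenvalues_sub_le hH' (by rwa [add_sub_add_right_eq_sub])
    (by positivity) hBc
  simp only [Function.comp_apply, Finset.sum_sub_distrib, Equiv.sum_comp e, Equiv.sum_comp e',
    Equiv.sum_comp e (fun i => Real.log (hH.eigenvalues i)),
    Equiv.sum_comp e' (fun i => Real.log (hH'.eigenvalues i))]
  linarith [one_div_mul_eq_div (2 * σ ^ 2)
    (∑ i, hH.eigenvalues i - ∑ i, hH'.eigenvalues i)]

theorem prop1_nld_slack {n : ℕ} (K Khat : Matrix (Fin (n + 1)) (Fin (n + 1)) ℝ)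
    (hK : K.PosSemidef) (hKhat : Khat.PosSemidef) (hdiff : (K - Khat).PosSemidef)
    (σ : ℝ) (hσ : 0 < σ ^ 2)
    (hH : (K + σ ^ 2 • 1).IsHermitian) (hH' : (Khat + σ ^ 2 • 1).IsHermitian)
    (lam lamhat : Fin (n + 1) → ℝ)
    (hlam_desc : Antitone lam) (hlamhat_desc : Antitone lamhat)
    (hlam : ∃ e : Fin (n + 1) ≃ Fin (n + 1), lam = hH.eigenvalues ∘ e)
    (hlamhat : ∃ e : Fin (n + 1) ≃ Fin (n + 1), lamhat = hH'.eigenvalues ∘ e)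
    (hmin : 2 * σ ^ 2 ≤ lamhat (Fin.last n)) :
    (1 / 2) * ∑ i, (Real.log (lam i) - Real.log (lamhat i)) ≤
      (1 / (2 * σ ^ 2)) * ∑ i, (lam i - lamhat i) -
        (1 / 2) * ∑ i, (Real.log (lam i) - Real.log (lamhat i)) :=
  prop1_nld_slack_general K Khat hdiff σ hσ hH hH' lam lamhat hlamhat_desc hlam hlamhat hmin
end

section
/- For symmetric matrices K ⪰ K̂ ⪰ 0 and σ² > 0 and any y ∈ ℝ^N, -½ yᵀ(K̂ + σ²I)⁻¹ y ≤ -½ yᵀ(K + σ²I)⁻¹ y ≤ -½ yᵀ(K + (σ² + Tr(K - K̂))I)⁻¹ y. -/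
/-!
For positive definite `A`, `y ⬝ᵥ A⁻¹ *ᵥ y` is the maximum over `x` of `2 (x ⬝ᵥ y) - x ⬝ᵥ A *ᵥ x`,
attained at `x = A⁻¹ *ᵥ y`. Each function maximised is antitone in `A` for the Loewner order, hence
so is `y ⬝ᵥ A⁻¹ *ᵥ y`. Both inequalities are instances of this, since
`K̂ + σ²I ⪯ K + σ²I ⪯ K + (σ² + tr (K - K̂)) I`, the trace of the positive semidefinite `K - K̂`
being nonnegative.
-/

open Matrix

theorem Matrix.IsSymm.dotProduct_mulVec_comm {R n : Type*} [CommSemiring R] [Fintype n]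
    {A : Matrix n n R} (hA : A.IsSymm) (u v : n → R) : u ⬝ᵥ A *ᵥ v = v ⬝ᵥ A *ᵥ u := by
  rw [dotProduct_mulVec, ← mulVec_transpose, hA.eq, dotProduct_comm]

namespace Matrix.PosDef

variable {n : Type*} [Fintype n] [DecidableEq n] {A B : Matrix n n ℝ}

theorem mulVec_inv_mulVec (hA : A.PosDef) (y : n → ℝ) : A *ᵥ (A⁻¹ *ᵥ y) = y := by
  rw [mulVec_mulVec, mul_nonsing_inv _ ((isUnit_iff_isUnit_det A).mp hA.isUnit), one_mulVec]

theorem two_mul_dotProduct_sub_le_dotProduct_inv_mulVec (hA : A.PosDef) (x y : n → ℝ) :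
    2 * (x ⬝ᵥ y) - x ⬝ᵥ A *ᵥ x ≤ y ⬝ᵥ A⁻¹ *ᵥ y := by
  set w := A⁻¹ *ᵥ y
  have hAw : A *ᵥ w = y := hA.mulVec_inv_mulVec y
  have hsymm : A.IsSymm := isHermitian_iff_isSymm.mp hA.isHermitian
  have hsq := hA.posSemidef.dotProduct_mulVec_nonneg (x - w)
  have hexpand : star (x - w) ⬝ᵥ A *ᵥ (x - w)
      = x ⬝ᵥ A *ᵥ x - 2 * (x ⬝ᵥ A *ᵥ w) + w ⬝ᵥ A *ᵥ w := by
    simp only [star_trivial, sub_dotProduct, mulVec_sub, dotProduct_sub,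
      hsymm.dotProduct_mulVec_comm w x]
    ring
  rw [hexpand, hAw, dotProduct_comm w y] at hsq
  linarith

theorem dotProduct_inv_mulVec_le_of_sub_posSemidef (hA : A.PosDef) (hAB : (B - A).PosSemidef)
    (y : n → ℝ) : y ⬝ᵥ B⁻¹ *ᵥ y ≤ y ⬝ᵥ A⁻¹ *ᵥ y := by
  have hB : B.PosDef := by simpa using hA.add_posSemidef hAB
  set x := B⁻¹ *ᵥ y
  have hBx : B *ᵥ x = y := hB.mulVec_inv_mulVec y
  have hgap : 0 ≤ x ⬝ᵥ B *ᵥ x - x ⬝ᵥ A *ᵥ x := by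
    simpa only [star_trivial, sub_mulVec, dotProduct_sub] using hAB.dotProduct_mulVec_nonneg x
  have hvar := hA.two_mul_dotProduct_sub_le_dotProduct_inv_mulVec x y
  have hquad : y ⬝ᵥ x = x ⬝ᵥ B *ᵥ x := by rw [hBx, dotProduct_comm]
  rw [← hquad] at hgap
  linarith [dotProduct_comm x y]

end Matrix.PosDef

theorem nip_sandwich {N : ℕ} (K Khat : Matrix (Fin N) (Fin N) ℝ)
    (hKhat : Khat.PosSemidef) (hdiff : (K - Khat).PosSemidef)
    (σ : ℝ) (hσ : 0 < σ ^ 2) (y : Fin N → ℝ) :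
    -(1 / 2) * (y ⬝ᵥ (Khat + σ ^ 2 • 1)⁻¹.mulVec y) ≤
      -(1 / 2) * (y ⬝ᵥ (K + σ ^ 2 • 1)⁻¹.mulVec y) ∧
    -(1 / 2) * (y ⬝ᵥ (K + σ ^ 2 • 1)⁻¹.mulVec y) ≤
      -(1 / 2) * (y ⬝ᵥ (K + (σ ^ 2 + (K - Khat).trace) • 1)⁻¹.mulVec y) := by
  have hK : K.PosSemidef := by simpa using hdiff.add hKhat
  have hnoise : (σ ^ 2 • 1 : Matrix (Fin N) (Fin N) ℝ).PosDef := PosDef.one.smul hσ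
  have hinflate : ((K + (σ ^ 2 + (K - Khat).trace) • 1) - (K + σ ^ 2 • 1)).PosSemidef := by
    rw [add_sub_add_left_eq_sub, add_smul, add_sub_cancel_left]
    exact PosSemidef.one.smul hdiff.trace_nonneg
  have hlower := (hnoise.posSemidef_add hKhat).dotProduct_inv_mulVec_le_of_sub_posSemidef
    (by rwa [add_sub_add_right_eq_sub]) y
  have hupper := (hnoise.posSemidef_add hK).dotProduct_inv_mulVec_le_of_sub_posSemidef hinflate y
  constructor <;> linarith
end
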